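/- arXiv:1504.02155 — 4 statements merged into one kernel-verified Lean document; each statement's English description precedes it below -/
import Mathlib

section
/- Let V ∈ ℝ^{r×r} be symmetric positive semidefinite, and let A₁₁, N₁₁ ∈ ℝ^{r×r} satisfy A₁₁V + VA₁₁ᵀ + N₁₁VN₁₁ᵀ = 0. Then the kernel of V is invariant under A₁₁ᵀ and under N₁₁ᵀ, and consequently the image of V is invariant under A₁₁ and under N₁₁. -/
/-!
Applying the Lyapunov equation to a kernel vector `z` of `V` gives `V Aᴴ z + N V Nᴴ z = 0`.
Pairing with `z` and using that `V` is Hermitian, the first term vanishes and the second becomes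
`⟨Nᴴ z, V Nᴴ z⟩`, so positive semidefiniteness forces `V Nᴴ z = 0`, and then `V Aᴴ z = 0`.
Since `range V = (ker V)ᗮ` for Hermitian `V`, invariance of `ker V` under `Pᴴ` is invariance of
`range V` under `P`.
-/

open Matrix

open scoped ComplexOrder

namespace Matrix

variable {m n 𝕜 : Type*} [Fintype m] [Fintype n] [RCLike 𝕜]

theorem star_mulVec_dotProduct (A : Matrix m n 𝕜) (x : m → 𝕜) (y : n → 𝕜) :
    star (Aᴴ *ᵥ x) ⬝ᵥ y = star x ⬝ᵥ A *ᵥ y := by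
  rw [star_mulVec, conjTranspose_conjTranspose, dotProduct_mulVec]

theorem exists_mulVec_eq_of_forall_mulVec_conjTranspose_eq_zero (M : Matrix m n 𝕜) (b : m → 𝕜)
    (hb : ∀ y, Mᴴ *ᵥ y = 0 → star y ⬝ᵥ b = 0) : ∃ u, M *ᵥ u = b := by
  classical
  have hker : WithLp.toLp 2 b ∈ (toEuclideanLin Mᴴ).kerᗮ := by
    rw [Submodule.mem_orthogonal]
    intro y hy
    rw [EuclideanSpace.inner_eq_star_dotProduct, dotProduct_comm]
    exact hb y.ofLp (by simpa using congrArg WithLp.ofLp (LinearMap.mem_ker.mp hy))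
  rw [LinearMap.orthogonal_ker, ← toEuclideanLin_conjTranspose_eq_adjoint,
    conjTranspose_conjTranspose] at hker
  obtain ⟨u, hu⟩ := hker
  exact ⟨u.ofLp, by simpa using congrArg WithLp.ofLp hu⟩

theorem IsHermitian.range_invariant_of_ker_invariant_conjTranspose {V : Matrix n n 𝕜}
    (hV : V.IsHermitian) (P : Matrix n n 𝕜) (hP : ∀ z, V *ᵥ z = 0 → V *ᵥ (Pᴴ *ᵥ z) = 0)
    (z : n → 𝕜) : ∃ u, P *ᵥ (V *ᵥ z) = V *ᵥ u := by
  refine (V.exists_mulVec_eq_of_forall_mulVec_conjTranspose_eq_zero _ fun y hy => ?_).imp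
    fun _ => Eq.symm
  rw [hV.eq] at hy
  rw [← star_mulVec_dotProduct, ← star_mulVec_dotProduct, hV.eq, hP y hy, star_zero,
    zero_dotProduct]

theorem PosSemidef.ker_invariant_conjTranspose_of_lyapunov {V A N : Matrix n n 𝕜}
    (hV : V.PosSemidef) (h : A * V + V * Aᴴ + N * V * Nᴴ = 0) {z : n → 𝕜} (hz : V *ᵥ z = 0) :
    V *ᵥ (Aᴴ *ᵥ z) = 0 ∧ V *ᵥ (Nᴴ *ᵥ z) = 0 := by
  have hsum : V *ᵥ (Aᴴ *ᵥ z) + N *ᵥ (V *ᵥ (Nᴴ *ᵥ z)) = 0 := by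
    have := congrArg (· *ᵥ z) h
    simpa only [add_mulVec, ← mulVec_mulVec, hz, mulVec_zero, zero_add, zero_mulVec] using this
  have hstar_z : ∀ w, star z ⬝ᵥ V *ᵥ w = 0 := fun w => by
    rw [← star_mulVec_dotProduct, hV.isHermitian.eq, hz, star_zero, zero_dotProduct]
  have hN : V *ᵥ (Nᴴ *ᵥ z) = 0 := by
    rw [← hV.dotProduct_mulVec_zero_iff]
    calc star (Nᴴ *ᵥ z) ⬝ᵥ V *ᵥ (Nᴴ *ᵥ z) = star z ⬝ᵥ N *ᵥ (V *ᵥ (Nᴴ *ᵥ z)) :=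
          star_mulVec_dotProduct ..
      _ = star z ⬝ᵥ (V *ᵥ (Aᴴ *ᵥ z) + N *ᵥ (V *ᵥ (Nᴴ *ᵥ z))) := by
          rw [dotProduct_add, hstar_z, zero_add]
      _ = 0 := by rw [hsum, dotProduct_zero]
  refine ⟨?_, hN⟩
  rwa [hN, mulVec_zero, add_zero] at hsum

end Matrix

theorem stmt_7 {r : ℕ} (V A₁₁ N₁₁ : Matrix (Fin r) (Fin r) ℝ)
    (hV : V.PosSemidef)
    (heq : A₁₁ * V + V * A₁₁ᵀ + N₁₁ * V * N₁₁ᵀ = 0) :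
    (∀ z : Fin r → ℝ, V.mulVec z = 0 →
        V.mulVec (A₁₁ᵀ.mulVec z) = 0 ∧ V.mulVec (N₁₁ᵀ.mulVec z) = 0) ∧
    (∀ z : Fin r → ℝ,
        (∃ u, A₁₁.mulVec (V.mulVec z) = V.mulVec u) ∧
        (∃ u, N₁₁.mulVec (V.mulVec z) = V.mulVec u)) := by
  simp only [← conjTranspose_eq_transpose_of_trivial] at heq ⊢
  have hker z (hz : V *ᵥ z = 0) := hV.ker_invariant_conjTranspose_of_lyapunov heq hz
  refine ⟨hker, fun z => ⟨?_, ?_⟩⟩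
  · exact hV.isHermitian.range_invariant_of_ker_invariant_conjTranspose A₁₁
      (fun y hy => (hker y hy).1) z
  · exact hV.isHermitian.range_invariant_of_ker_invariant_conjTranspose N₁₁
      (fun y hy => (hker y hy).2) z
end

section
/- Let a > 1, A = diag(-1, -a²), N = [[0,0],[1,0]], B = (1,0)ᵀ, C = (0,1). Then P = diag(1/2, 1/(4a²)) and Q = diag(1/(4a²), 1/(2a²)) satisfy the type I Lyapunov equations AP + PAᵀ + NPNᵀ = -BBᵀ and AᵀQ + QA + NᵀQN = -CᵀC, and the eigenvalues of PQ are 1/(8a²) and 1/(8a⁴), giving Hankel singular values σ₁ = 1/(√8·a) and σ₂ = 1/(√8·a²). -/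
/-!
Apart from the shift `N`, every matrix involved is diagonal, and `N D Nᵀ` (resp. `Nᵀ D N`) moves the
first (resp. second) diagonal entry of a diagonal `D` to the other slot. Both Lyapunov equations
therefore collapse to scalar identities, and `PQ` is diagonal, so its spectrum is its diagonal.
-/

open Matrix

theorem Matrix.transpose_fin_two_of {α : Type*} (a b c d : α) :
    (!![a, b; c, d])ᵀ = !![a, c; b, d] := by
  ext i j; fin_cases i <;> fin_cases j <;> rfl

theorem Matrix.fin_two_diag_mul_diag {R : Type*} [NonUnitalNonAssocSemiring R]
    (x₁ x₂ y₁ y₂ : R) :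
    !![x₁, 0; 0, x₂] * !![y₁, 0; 0, y₂] = !![x₁ * y₁, 0; 0, x₂ * y₂] := by
  simp

theorem Matrix.spectrum_fin_two_diag {K : Type*} [Field K] (x y : K) :
    spectrum K !![x, 0; 0, y] = {x, y} := by
  rw [← diagonal_vec2, spectrum_diagonal, range_cons_cons_empty]

section TypeOneLyapunov

variable {R : Type*} [CommRing R]

theorem lyapunov_diag_add_lower_shift (α₁ α₂ p₁ p₂ : R) :
    !![α₁, 0; 0, α₂] * !![p₁, 0; 0, p₂] + !![p₁, 0; 0, p₂] * (!![α₁, 0; 0, α₂])ᵀ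
      + !![0, 0; 1, 0] * !![p₁, 0; 0, p₂] * (!![0, 0; 1, 0])ᵀ
      = !![2 * α₁ * p₁, 0; 0, 2 * α₂ * p₂ + p₁] := by
  simp only [transpose_fin_two_of, mul_fin_two, of_add_of]
  congr 1
  ext i j
  fin_cases i <;> fin_cases j <;> simp <;> ring

theorem lyapunov_transpose_diag_add_upper_shift (α₁ α₂ q₁ q₂ : R) :
    (!![α₁, 0; 0, α₂])ᵀ * !![q₁, 0; 0, q₂] + !![q₁, 0; 0, q₂] * !![α₁, 0; 0, α₂]
      + (!![0, 0; 1, 0])ᵀ * !![q₁, 0; 0, q₂] * !![0, 0; 1, 0]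
      = !![2 * α₁ * q₁ + q₂, 0; 0, 2 * α₂ * q₂] := by
  simp only [transpose_fin_two_of, mul_fin_two, of_add_of]
  congr 1
  ext i j
  fin_cases i <;> fin_cases j <;> simp <;> ring

theorem neg_fin_two_col_mul_transpose (b₁ b₂ : R) :
    -(!![b₁; b₂] * (!![b₁; b₂])ᵀ) = !![-(b₁ * b₁), -(b₁ * b₂); -(b₂ * b₁), -(b₂ * b₂)] := by
  ext i j
  fin_cases i <;> fin_cases j <;> simp [vecMul, dotProduct]

theorem neg_transpose_mul_fin_two_row (c₁ c₂ : R) :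
    -((!![c₁, c₂])ᵀ * !![c₁, c₂]) = !![-(c₁ * c₁), -(c₁ * c₂); -(c₂ * c₁), -(c₂ * c₂)] := by
  ext i j
  fin_cases i <;> fin_cases j <;> simp [mul_apply]

end TypeOneLyapunov

theorem Real.one_div_sqrt_mul_sq {c : ℝ} (hc : 0 ≤ c) (x : ℝ) :
    (1 / (√c * x)) ^ 2 = 1 / (c * x ^ 2) := by
  rw [div_pow, mul_pow, sq_sqrt hc, one_pow]

theorem stmt_14 (a : ℝ) (ha : 1 < a) :
    let A : Matrix (Fin 2) (Fin 2) ℝ := !![-1, 0; 0, -a ^ 2]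
    let N : Matrix (Fin 2) (Fin 2) ℝ := !![0, 0; 1, 0]
    let B : Matrix (Fin 2) (Fin 1) ℝ := !![1; 0]
    let C : Matrix (Fin 1) (Fin 2) ℝ := !![0, 1]
    let P : Matrix (Fin 2) (Fin 2) ℝ := !![1 / 2, 0; 0, 1 / (4 * a ^ 2)]
    let Q : Matrix (Fin 2) (Fin 2) ℝ := !![1 / (4 * a ^ 2), 0; 0, 1 / (2 * a ^ 2)]
    A * P + P * Aᵀ + N * P * Nᵀ = -(B * Bᵀ) ∧
    Aᵀ * Q + Q * A + Nᵀ * Q * N = -(Cᵀ * C) ∧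
    spectrum ℝ (P * Q) = {1 / (8 * a ^ 2), 1 / (8 * a ^ 4)} ∧
    (1 / (Real.sqrt 8 * a)) ^ 2 = 1 / (8 * a ^ 2) ∧
    (1 / (Real.sqrt 8 * a ^ 2)) ^ 2 = 1 / (8 * a ^ 4) := by
  intro A N B C P Q
  have ha₀ : a ≠ 0 := (zero_lt_one.trans ha).ne'
  refine ⟨?_, ?_, ?_, ?_, ?_⟩
  · rw [lyapunov_diag_add_lower_shift, neg_fin_two_col_mul_transpose]
    congr 1
    ext i j
    fin_cases i <;> fin_cases j <;> simp [field]
    ring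
  · rw [lyapunov_transpose_diag_add_upper_shift, neg_transpose_mul_fin_two_row]
    congr 1
    ext i j
    fin_cases i <;> fin_cases j <;> simp [field]
    ring
  · rw [fin_two_diag_mul_diag, spectrum_fin_two_diag]
    congr 1
    · field_simp; ring
    · congr 1; field_simp; ring
  · exact Real.one_div_sqrt_mul_sq (by norm_num) a
  · rw [Real.one_div_sqrt_mul_sq (by norm_num), ← pow_mul]
end

section
/- Let a > 1, A = diag(-1, -a²), N = [[0,0],[1,0]], B = (1,0)ᵀ, C = (0,1). Suppose γ > 0 and there exists a symmetric matrix X = [[x₁, x₂],[x₂, x₃]] ≺ 0 such that AᵀX + XA + NᵀXN - CᵀC - γ⁻²XBBᵀX ≻ 0. Then γ > 1/(√2·a). -/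
/-! Only the diagonal of the Riccati matrix is needed, and each diagonal entry of a positive definite
matrix is positive. The (2,2) entry gives `2 a² x₃ < -1`. The (1,1) entry, multiplied by `γ²`, reads
`(x₁ + γ²)² < γ² (γ² + x₃)`, whose right-hand side is below `γ⁴ - γ² / (2 a²)`; hence `2 a² γ² > 1`. -/

open Matrix

def riccati {n m p R : Type*} [Fintype n] [Fintype m] [Fintype p] [Field R]
    (A N X : Matrix n n R) (B : Matrix n m R) (C : Matrix p n R) (γ : R) : Matrix n n R :=
  Aᵀ * X + X * A + Nᵀ * X * N - Cᵀ * C - γ⁻¹ ^ 2 • (X * B * Bᵀ * X)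

section

variable {R : Type*} [Field R] (a γ x₁ x₂ x₃ : R)

theorem riccati_apply_zero_zero :
    riccati !![-1, 0; 0, -a ^ 2] !![0, 0; 1, 0] !![x₁, x₂; x₂, x₃] !![1; 0] !![0, 1] γ 0 0 =
      -2 * x₁ + x₃ - γ⁻¹ ^ 2 * x₁ ^ 2 := by
  simp [riccati, Matrix.mul_apply, Fin.sum_univ_two, vecMul, dotProduct]
  ring

theorem riccati_apply_one_one :
    riccati !![-1, 0; 0, -a ^ 2] !![0, 0; 1, 0] !![x₁, x₂; x₂, x₃] !![1; 0] !![0, 1] γ 1 1 =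
      -2 * a ^ 2 * x₃ - 1 - γ⁻¹ ^ 2 * x₂ ^ 2 := by
  simp [riccati, Matrix.mul_apply, Fin.sum_univ_two, vecMul, dotProduct]
  ring

end

theorem one_lt_two_mul_sq_mul_sq_of_riccati_diag {a γ x₁ x₂ x₃ : ℝ} (hγ : 0 < γ)
    (h₁₁ : 0 < -2 * x₁ + x₃ - γ⁻¹ ^ 2 * x₁ ^ 2)
    (h₂₂ : 0 < -2 * a ^ 2 * x₃ - 1 - γ⁻¹ ^ 2 * x₂ ^ 2) :
    1 < 2 * a ^ 2 * γ ^ 2 := by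
  have hx₃ : 2 * a ^ 2 * x₃ < -1 := by nlinarith [sq_nonneg (γ⁻¹ * x₂)]
  have hsq : (x₁ + γ ^ 2) ^ 2 < γ ^ 2 * (γ ^ 2 + x₃) := by
    have := mul_pos (pow_pos hγ 2) h₁₁
    field_simp at this
    nlinarith
  nlinarith [sq_nonneg (x₁ + γ ^ 2), pow_pos hγ 2]

theorem one_div_sqrt_two_mul_lt_of_one_lt_two_mul_sq_mul_sq {a γ : ℝ} (hγ : 0 < γ)
    (h : 1 < 2 * a ^ 2 * γ ^ 2) : 1 / (√2 * a) < γ := by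
  rcases le_or_gt a 0 with ha | ha
  · exact (one_div_nonpos.2 (mul_nonpos_of_nonneg_of_nonpos (Real.sqrt_nonneg 2) ha)).trans_lt hγ
  rw [div_lt_iff₀ (by positivity)]
  have : 1 < (γ * (√2 * a)) ^ 2 := by
    rw [mul_pow, mul_pow, Real.sq_sqrt zero_le_two]
    linarith
  nlinarith [mul_pos hγ (mul_pos (Real.sqrt_pos.2 two_pos) ha)]

theorem stmt_15_general (a : ℝ) (γ : ℝ) (hγ : 0 < γ) (x₁ x₂ x₃ : ℝ)
    (hRic :
      let A : Matrix (Fin 2) (Fin 2) ℝ := !![-1, 0; 0, -a ^ 2]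
      let N : Matrix (Fin 2) (Fin 2) ℝ := !![0, 0; 1, 0]
      let B : Matrix (Fin 2) (Fin 1) ℝ := !![1; 0]
      let C : Matrix (Fin 1) (Fin 2) ℝ := !![0, 1]
      let X : Matrix (Fin 2) (Fin 2) ℝ := !![x₁, x₂; x₂, x₃]
      (Aᵀ * X + X * A + Nᵀ * X * N - Cᵀ * C - γ⁻¹ ^ 2 • (X * B * Bᵀ * X)).PosDef) :
    γ > 1 / (Real.sqrt 2 * a) := by
  have hM : (riccati !![-1, 0; 0, -a ^ 2] !![0, 0; 1, 0] !![x₁, x₂; x₂, x₃] !![1; 0] !![0, 1] γ).PosDef :=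
    hRic
  have h₁₁ := riccati_apply_zero_zero a γ x₁ x₂ x₃ ▸ hM.diag_pos (i := 0)
  have h₂₂ := riccati_apply_one_one a γ x₁ x₂ x₃ ▸ hM.diag_pos (i := 1)
  exact one_div_sqrt_two_mul_lt_of_one_lt_two_mul_sq_mul_sq hγ
    (one_lt_two_mul_sq_mul_sq_of_riccati_diag hγ h₁₁ h₂₂)

theorem stmt_15 (a : ℝ) (ha : 1 < a) (γ : ℝ) (hγ : 0 < γ) (x₁ x₂ x₃ : ℝ)
    (hXneg : (-(!![x₁, x₂; x₂, x₃] : Matrix (Fin 2) (Fin 2) ℝ)).PosDef)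
    (hRic :
      let A : Matrix (Fin 2) (Fin 2) ℝ := !![-1, 0; 0, -a ^ 2]
      let N : Matrix (Fin 2) (Fin 2) ℝ := !![0, 0; 1, 0]
      let B : Matrix (Fin 2) (Fin 1) ℝ := !![1; 0]
      let C : Matrix (Fin 1) (Fin 2) ℝ := !![0, 1]
      let X : Matrix (Fin 2) (Fin 2) ℝ := !![x₁, x₂; x₂, x₃]
      (Aᵀ * X + X * A + Nᵀ * X * N - Cᵀ * C - γ⁻¹ ^ 2 • (X * B * Bᵀ * X)).PosDef) :
    γ > 1 / (Real.sqrt 2 * a) :=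
  stmt_15_general a γ hγ x₁ x₂ x₃ hRic
end

section
/- Let a > 1, p ∈ (0,1], A = diag(-1, -a²), N = [[0,0],[1,0]], B = (1,0)ᵀ. Then P = diag(1/(1+√(1-p)), 1/p) ≻ 0 satisfies AᵀP⁻¹ + P⁻¹A + NᵀP⁻¹N ⪯ -P⁻¹BBᵀP⁻¹. -/
/-!
With `x = 1 + √(1 - p)` we have `P⁻¹ = diag(x, p)`, and for diagonal `P⁻¹` everything in the
inequality is diagonal: the gap matrix is `diag(2x - x² - p, 2a²p)`. Since `x` is a root of
`x² - 2x + p = 0`, the first entry vanishes and the second is nonnegative.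
-/

open Matrix

theorem Matrix.inv_fin_two_diagonal {K : Type*} [Field K] {x y : K} (hx : x ≠ 0) (hy : y ≠ 0) :
    (!![x, 0; 0, y])⁻¹ = !![x⁻¹, 0; 0, y⁻¹] :=
  inv_eq_left_inv <| by simp [one_fin_two, hx, hy]

theorem riccati_defect_diagonal {R : Type*} [CommRing R] (a x y : R) :
    let A : Matrix (Fin 2) (Fin 2) R := !![-1, 0; 0, -a ^ 2]
    let N : Matrix (Fin 2) (Fin 2) R := !![0, 0; 1, 0]
    let B : Matrix (Fin 2) (Fin 1) R := !![1; 0]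
    let Q : Matrix (Fin 2) (Fin 2) R := !![x, 0; 0, y]
    (-(Q * B * Bᵀ * Q)) - (Aᵀ * Q + Q * A + Nᵀ * Q * N) =
      !![2 * x - x ^ 2 - y, 0; 0, 2 * a ^ 2 * y] := by
  intro A N B Q
  ext i j
  fin_cases i <;> fin_cases j <;>
    simp [A, N, B, Q, mul_apply, Fin.sum_univ_two, vecMul, dotProduct] <;> ring

theorem one_add_sqrt_one_sub_sq {p : ℝ} (hp : p ≤ 1) :
    (1 + √(1 - p)) ^ 2 = 2 * (1 + √(1 - p)) - p := by
  nlinarith [Real.sq_sqrt (sub_nonneg.mpr hp)]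

theorem stmt_16_general (a p : ℝ) (hp : p ∈ Set.Ioc (0 : ℝ) 1) :
    let A : Matrix (Fin 2) (Fin 2) ℝ := !![-1, 0; 0, -a ^ 2]
    let N : Matrix (Fin 2) (Fin 2) ℝ := !![0, 0; 1, 0]
    let B : Matrix (Fin 2) (Fin 1) ℝ := !![1; 0]
    let P : Matrix (Fin 2) (Fin 2) ℝ :=
      !![1 / (1 + Real.sqrt (1 - p)), 0; 0, 1 / p]
    P.PosDef ∧
    ((-(P⁻¹ * B * Bᵀ * P⁻¹)) - (Aᵀ * P⁻¹ + P⁻¹ * A + Nᵀ * P⁻¹ * N)).PosSemidef := by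
  obtain ⟨hp0, hp1⟩ := hp
  set x := 1 + √(1 - p)
  have hx : 0 < x := by positivity
  have hPinv : (!![1 / x, 0; 0, 1 / p])⁻¹ = !![x, 0; 0, p] := by
    simpa using inv_fin_two_diagonal (inv_ne_zero hx.ne') (inv_ne_zero hp0.ne')
  have hx_root : x ^ 2 = 2 * x - p := one_add_sqrt_one_sub_sq hp1
  dsimp only
  refine ⟨?_, ?_⟩
  · rw [← diagonal_vec2, posDef_diagonal_iff, Fin.forall_fin_two]
    exact ⟨by simpa using hx, by simpa using hp0⟩
  · rw [hPinv, riccati_defect_diagonal, ← diagonal_vec2, posSemidef_diagonal_iff,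
      Fin.forall_fin_two]
    exact ⟨by simp; linarith, by simp; positivity⟩

theorem stmt_16 (a p : ℝ) (ha : 1 < a) (hp : p ∈ Set.Ioc (0 : ℝ) 1) :
    let A : Matrix (Fin 2) (Fin 2) ℝ := !![-1, 0; 0, -a ^ 2]
    let N : Matrix (Fin 2) (Fin 2) ℝ := !![0, 0; 1, 0]
    let B : Matrix (Fin 2) (Fin 1) ℝ := !![1; 0]
    let P : Matrix (Fin 2) (Fin 2) ℝ :=
      !![1 / (1 + Real.sqrt (1 - p)), 0; 0, 1 / p]
    P.PosDef ∧
    ((-(P⁻¹ * B * Bᵀ * P⁻¹)) - (Aᵀ * P⁻¹ + P⁻¹ * A + Nᵀ * P⁻¹ * N)).PosSemidef :=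
  stmt_16_general a p hp
end
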